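/- Let G be a group with an automorphism σ of order 2, let N be a normal subgroup of G with σ(N) = N, let C = G/N with induced automorphism σ, and π: G → C the projection. Fix a class [c] ∈ H¹(C,σ) and assume there is a cocycle g_c ∈ Z¹(G,σ) with π(g_c) = c. Define τ: G → G by τ(g) = g_c σ(g) g_c⁻¹; then τ is an automorphism of G of order at most 2, it maps N to N, and H¹(N,τ) carries a right action of C^τ = {d ∈ C : τ(d) = d} given by [n]·d = [g⁻¹ n τ(g)] for π(g) = d. If {[n₁],…,[n_r]} is a set of representatives of the C^τ-orbits in H¹(N,τ), then π_*⁻¹([c]) = {[n₁ g_c],…,[n_r g_c]} ⊆ H¹(G,σ), and the map sending the C^τ-orbit of [n] to [n g_c] is a bijection from the set of C^τ-orbits in H¹(N,τ) onto π_*⁻¹([c]). -/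

import Mathlib

/-- `g` is a cocycle for the involution `σ`. -/
def IsCocycle {G : Type*} [Group G] (σ : G →* G) (g : G) : Prop := g * σ g = 1

/-- The automorphism of `C = G ⧸ N` induced by `σ`. -/
def inducedConj {G : Type*} [Group G] (σ : G →* G) (N : Subgroup G) [N.Normal]
    (hN : ∀ n ∈ N, σ n ∈ N) : G ⧸ N →* G ⧸ N :=
  QuotientGroup.map N N σ (fun n hn => hN n hn)

/-- The "twisted" involution `τ(g) = g_c σ(g) g_c⁻¹` associated to a cocycle `g_c`. -/
def tauHom {G : Type*} [Group G] (σ : G →* G) (c : G) : G →* G where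
  toFun g := c * σ g * c⁻¹
  map_one' := by simp
  map_mul' a b := by simp only [map_mul]; group

/-- Fix a class `[c] ∈ H¹(C,σ)` admitting a cocycle lift `g_c ∈ Z¹(G,σ)` (`π(g_c) = c`), and
let `τ(g) = g_c σ(g) g_c⁻¹`. Then: `τ` is an automorphism of order at most 2 mapping `N` to
`N`; `H¹(N,τ)` carries a right `C^τ`-action `[n]·d = [g⁻¹ n τ(g)]` (`π(g) = d`); and the map
sending the `C^τ`-orbit of `[n]` to `[n·g_c] ∈ H¹(G,σ)` is a bijection from the set of
`C^τ`-orbits in `H¹(N,τ)` onto `π₊⁻¹([c])`.  (Here `d ∈ C^τ` is expressed as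
`π(τ(g)) = π(g)` for `π(g) = d`.) -/
theorem statement5 {G : Type*} [Group G] (σ : G →* G) (hσ : ∀ g, σ (σ g) = g)
    (N : Subgroup G) [N.Normal] (hN : ∀ n ∈ N, σ n ∈ N)
    (gc : G) (hgc : IsCocycle σ gc) :
    -- τ is an automorphism of G of order at most 2
    (Function.Bijective (tauHom σ gc) ∧ ∀ g, tauHom σ gc (tauHom σ gc g) = g) ∧
    -- τ maps N to N
    (∀ n ∈ N, tauHom σ gc n ∈ N) ∧
    -- H¹(N,τ) carries the right C^τ-action [n]·d = [g⁻¹ n τ(g)]: the formula lands in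
    -- the τ-cocycles of N whenever π(g) is fixed by the automorphism induced by τ on C
    (∀ g n : G, ((tauHom σ gc g : G) : G ⧸ N) = (g : G ⧸ N) →
        n ∈ N → IsCocycle (tauHom σ gc) n →
        g⁻¹ * n * tauHom σ gc g ∈ N ∧ IsCocycle (tauHom σ gc) (g⁻¹ * n * tauHom σ gc g)) ∧
    -- the map [n] ↦ [n·g_c] lands in, and reaches all of, π₊⁻¹([c]):
    -- a σ-cocycle g of G has π₊([g]) = [c] iff g is σ-equivalent to n·g_c for some
    -- τ-cocycle n ∈ N
    (∀ g : G, IsCocycle σ g →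
        ((∃ d : G ⧸ N, (g : G ⧸ N) = d * (gc : G ⧸ N) * (inducedConj σ N hN d)⁻¹) ↔
         (∃ n : G, n ∈ N ∧ IsCocycle (tauHom σ gc) n ∧
            ∃ h : G, g = h * (n * gc) * (σ h)⁻¹))) ∧
    -- and it is injective on C^τ-orbits: for τ-cocycles n₁, n₂ ∈ N, the classes
    -- [n₁·g_c], [n₂·g_c] agree in H¹(G,σ) iff [n₁], [n₂] lie in the same C^τ-orbit
    (∀ n₁ n₂ : G, n₁ ∈ N → n₂ ∈ N →
        IsCocycle (tauHom σ gc) n₁ → IsCocycle (tauHom σ gc) n₂ →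
        ((∃ h : G, n₂ * gc = h * (n₁ * gc) * (σ h)⁻¹) ↔
         (∃ g : G, ((tauHom σ gc g : G) : G ⧸ N) = (g : G ⧸ N) ∧
            ∃ h ∈ N, n₂ = h * (g⁻¹ * n₁ * tauHom σ gc g) * (tauHom σ gc h)⁻¹))) := by
  have hσgc : σ gc = gc⁻¹ := eq_inv_of_mul_eq_one_right hgc
  have htau : ∀ g, tauHom σ gc g = gc * σ g * gc⁻¹ := fun g => rfl
  have hNorm : N.Normal := inferInstance
  have hinv : ∀ g, tauHom σ gc (tauHom σ gc g) = g := by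
    intro g
    simp only [htau, map_mul, map_inv, hσ, hσgc, inv_inv]
    group
  have hmapN : ∀ n ∈ N, tauHom σ gc n ∈ N := by
    intro n hn
    rw [htau]
    exact hNorm.conj_mem _ (hN n hn) gc
  refine ⟨⟨Function.bijective_iff_has_inverse.mpr ⟨tauHom σ gc, hinv, hinv⟩, hinv⟩, hmapN, ?_, ?_, ?_⟩
  · -- the action formula
    intro g n hg hn hcoc
    have hτn : tauHom σ gc n = n⁻¹ := eq_inv_of_mul_eq_one_right hcoc
    have hmem : g⁻¹ * tauHom σ gc g ∈ N := by
      have := (QuotientGroup.eq (s := N)).mp hg.symm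
      simpa using this
    constructor
    · have : g⁻¹ * n * tauHom σ gc g = (g⁻¹ * n * g) * (g⁻¹ * tauHom σ gc g) := by group
      rw [this]
      exact mul_mem (hNorm.conj_mem' _ hn g) hmem
    · show (g⁻¹ * n * tauHom σ gc g) * tauHom σ gc (g⁻¹ * n * tauHom σ gc g) = 1
      simp only [map_mul, map_inv, hinv, hτn]
      group
  · -- surjectivity onto the fiber
    intro g hg
    have hσg : σ g = g⁻¹ := eq_inv_of_mul_eq_one_right hg
    constructor
    · rintro ⟨d, hd⟩
      obtain ⟨h, rfl⟩ := QuotientGroup.mk_surjective d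
      have hind : inducedConj σ N hN ((h : G ⧸ N)) = ((σ h : G) : G ⧸ N) := rfl
      rw [hind] at hd
      have hd' : (g : G ⧸ N) = ((h * gc * (σ h)⁻¹ : G) : G ⧸ N) := by
        simpa using hd
      have hx : g⁻¹ * (h * gc * (σ h)⁻¹) ∈ N := (QuotientGroup.eq (s := N)).mp hd'
      set n : G := h⁻¹ * g * σ h * gc⁻¹ with hn_def
      have hninv : n⁻¹ = (g⁻¹ * h)⁻¹ * (g⁻¹ * (h * gc * (σ h)⁻¹)) * (g⁻¹ * h) := by
        rw [hn_def]; group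
      have hnN : n ∈ N := by
        rw [← inv_inv n, hninv]
        exact inv_mem (hNorm.conj_mem' _ hx (g⁻¹ * h))
      refine ⟨n, hnN, ?_, h, ?_⟩
      · show n * tauHom σ gc n = 1
        rw [htau, hn_def]
        simp only [map_mul, map_inv, hσ, hσgc, hσg, inv_inv]
        group
      · rw [hn_def]; group
    · rintro ⟨n, hn, hcoc, h, rfl⟩
      refine ⟨(h : G ⧸ N), ?_⟩
      have hind : inducedConj σ N hN ((h : G ⧸ N)) = ((σ h : G) : G ⧸ N) := rfl
      rw [hind]
      have : ((h * (n * gc) * (σ h)⁻¹ : G) : G ⧸ N) = ((h * gc * (σ h)⁻¹ : G) : G ⧸ N) := by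
        rw [QuotientGroup.eq]
        have := hNorm.conj_mem _ (inv_mem hn) (σ h * gc⁻¹)
        convert this using 1
        group
      rw [this]
      simp
  · -- injectivity on orbits
    intro n₁ n₂ hn₁ hn₂ hc₁ hc₂
    constructor
    · rintro ⟨h, hh⟩
      have key : n₂ = h * n₁ * (tauHom σ gc h)⁻¹ := by
        have hn2 : n₂ = (h * (n₁ * gc) * (σ h)⁻¹) * gc⁻¹ := by rw [← hh]; group
        rw [hn2, htau]; group
      have hτh : tauHom σ gc h = n₂⁻¹ * h * n₁ := by
        rw [key]; group
      refine ⟨h⁻¹, ?_, 1, one_mem N, ?_⟩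
      · rw [QuotientGroup.eq]
        have : (tauHom σ gc h⁻¹)⁻¹ * h⁻¹ = n₂⁻¹ * (h * n₁ * h⁻¹) := by
          rw [map_inv, inv_inv, hτh]; group
        rw [this]
        exact mul_mem (inv_mem hn₂) (hNorm.conj_mem _ hn₁ h)
      · rw [map_one, key, map_inv]
        group
    · rintro ⟨g, hgq, k, hk, rfl⟩
      refine ⟨k * g⁻¹, ?_⟩
      simp only [htau, map_mul, map_inv, hσ, hσgc, inv_inv]
      group
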